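/- arXiv:1203.4511 — 4 statements merged into one kernel-verified Lean document; each statement's English description precedes it below -/
import Mathlib

section
/- Let p : {0,...,T} → ℝ with p(k) > 1 for all k and p⁻ = min_k p(k). Then there exist constants C₁, C₂ > 0 such that for every x : {0,...,T+1} → ℝ with x(0) = x(T+1) = 0 and ‖x‖ := (∑_{k=1}^{T+1} |Δx(k-1)|²)^(1/2) ≥ 1, one has ∑_{k=1}^{T+1} |Δx(k-1)|^{p(k-1)} ≥ C₁ ‖x‖^{p⁻} − C₂. -/
/-!
Let `a k = x k - x (k - 1)` and let `j` maximize `|a k|` over the `N = T + 1` indices. Then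
`‖x‖ ≤ √N |a j|`, so `(‖x‖ / √N) ^ p⁻ ≤ |a j| ^ p⁻`, and `|a j| ^ p⁻ - 1 ≤ |a j| ^ p(j - 1)`
(compare exponents when `|a j| ≥ 1`, otherwise the left side is `≤ 0`). A single term bounds the
whole sum, giving the estimate with `C₁ = N ^ (-p⁻ / 2)` and `C₂ = 1`.
-/

open Finset

namespace Real

lemma rpow_sub_one_le_rpow_of_le {x m q : ℝ} (hx : 0 ≤ x) (hm : 0 ≤ m) (hmq : m ≤ q) :
    x ^ m - 1 ≤ x ^ q := by
  rcases le_or_gt 1 x with hx1 | hx1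
  · linarith [rpow_le_rpow_of_exponent_le hx1 hmq, rpow_nonneg hx q]
  · linarith [rpow_le_one hx hx1.le hm, rpow_nonneg hx q]

end Real

section

variable {ι : Type*} (s : Finset ι) (f : ι → ℝ)

lemma sqrt_sum_sq_le_sqrt_card_mul_abs {c : ℝ} (h : ∀ i ∈ s, |f i| ≤ |c|) :
    √(∑ i ∈ s, f i ^ 2) ≤ √(#s : ℝ) * |c| := by
  have hsum : ∑ i ∈ s, f i ^ 2 ≤ #s * c ^ 2 := by
    simpa using sum_le_card_nsmul s (fun i => f i ^ 2) (c ^ 2) fun i hi => sq_le_sq.mpr (h i hi)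
  calc √(∑ i ∈ s, f i ^ 2) ≤ √(#s * c ^ 2) := Real.sqrt_le_sqrt hsum
    _ = √(#s : ℝ) * |c| := by rw [Real.sqrt_mul (Nat.cast_nonneg _), Real.sqrt_sq_eq_abs]

theorem card_rpow_mul_sqrt_sum_sq_rpow_sub_one_le_sum_abs_rpow (hs : s.Nonempty) (q : ι → ℝ)
    {m : ℝ} (hm : 0 ≤ m) (hq : ∀ i ∈ s, m ≤ q i) :
    (#s : ℝ) ^ (-(m / 2)) * √(∑ i ∈ s, f i ^ 2) ^ m - 1 ≤ ∑ i ∈ s, |f i| ^ q i := by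
  obtain ⟨j, hj, hjmax⟩ := exists_max_image s (fun i => |f i|) hs
  have hN : (0 : ℝ) < #s := by exact_mod_cast hs.card_pos
  have hnorm : √(∑ i ∈ s, f i ^ 2) / √(#s : ℝ) ≤ |f j| := by
    rw [div_le_iff₀ (Real.sqrt_pos.mpr hN), mul_comm]
    exact sqrt_sum_sq_le_sqrt_card_mul_abs s f fun i hi => by simpa using hjmax i hi
  have hscale : (#s : ℝ) ^ (-(m / 2)) * √(∑ i ∈ s, f i ^ 2) ^ m
      = (√(∑ i ∈ s, f i ^ 2) / √(#s : ℝ)) ^ m := by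
    rw [Real.div_rpow (Real.sqrt_nonneg _) (Real.sqrt_nonneg _), Real.sqrt_eq_rpow (#s : ℝ),
      ← Real.rpow_mul hN.le, Real.rpow_neg hN.le, div_eq_inv_mul]
    ring_nf
  calc (#s : ℝ) ^ (-(m / 2)) * √(∑ i ∈ s, f i ^ 2) ^ m - 1 ≤ |f j| ^ m - 1 := by
        rw [hscale]; gcongr
    _ ≤ |f j| ^ q j := Real.rpow_sub_one_le_rpow_of_le (abs_nonneg _) hm (hq j hj)
    _ ≤ ∑ i ∈ s, |f i| ^ q i :=
        single_le_sum (f := fun i => |f i| ^ q i) (fun i _ => Real.rpow_nonneg (abs_nonneg _) _) hj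

end

theorem stmt3_general (T : ℕ) (p : ℕ → ℝ) (hp : ∀ k ∈ Finset.Icc 0 T, 1 < p k)
    (pm : ℝ) (hpm : pm = (Finset.Icc 0 T).inf' (Finset.nonempty_Icc.mpr (Nat.zero_le T)) p) :
    ∃ C₁ : ℝ, 0 < C₁ ∧ ∃ C₂ : ℝ, 0 < C₂ ∧
      ∀ x : ℕ → ℝ, x 0 = 0 → x (T + 1) = 0 →
        1 ≤ (∑ k ∈ Finset.Icc 1 (T + 1), (x k - x (k - 1)) ^ 2) ^ ((1 : ℝ) / 2) →
        C₁ * ((∑ k ∈ Finset.Icc 1 (T + 1), (x k - x (k - 1)) ^ 2) ^ ((1 : ℝ) / 2)) ^ pm - C₂ ≤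
          ∑ k ∈ Finset.Icc 1 (T + 1), |x k - x (k - 1)| ^ p (k - 1) := by
  have hpm_pos : 0 ≤ pm := by
    have : 1 < pm := by rw [hpm, lt_inf'_iff]; exact hp
    linarith
  have hpm_le : ∀ k ∈ Icc 1 (T + 1), pm ≤ p (k - 1) := fun k hk => by
    rw [hpm]
    exact inf'_le p (by simp only [mem_Icc] at hk ⊢; omega)
  refine ⟨((T + 1 : ℕ) : ℝ) ^ (-(pm / 2)), by positivity, 1, one_pos, fun x _ _ _ => ?_⟩
  have key := card_rpow_mul_sqrt_sum_sq_rpow_sub_one_le_sum_abs_rpow (Icc 1 (T + 1))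
    (fun k => x k - x (k - 1)) ⟨1, by simp⟩ (fun k => p (k - 1)) hpm_pos hpm_le
  rwa [Nat.card_Icc, Nat.add_sub_cancel, Real.sqrt_eq_rpow] at key

theorem stmt3 (T : ℕ) (hT : 1 ≤ T) (p : ℕ → ℝ) (hp : ∀ k ∈ Finset.Icc 0 T, 1 < p k)
    (pm : ℝ) (hpm : pm = (Finset.Icc 0 T).inf' (Finset.nonempty_Icc.mpr (Nat.zero_le T)) p) :
    ∃ C₁ : ℝ, 0 < C₁ ∧ ∃ C₂ : ℝ, 0 < C₂ ∧
      ∀ x : ℕ → ℝ, x 0 = 0 → x (T + 1) = 0 →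
        1 ≤ (∑ k ∈ Finset.Icc 1 (T + 1), (x k - x (k - 1)) ^ 2) ^ ((1 : ℝ) / 2) →
        C₁ * ((∑ k ∈ Finset.Icc 1 (T + 1), (x k - x (k - 1)) ^ 2) ^ ((1 : ℝ) / 2)) ^ pm - C₂ ≤
          ∑ k ∈ Finset.Icc 1 (T + 1), |x k - x (k - 1)| ^ p (k - 1) :=
  stmt3_general T p hp pm hpm
end

section
/- Let T ≥ 1, h : {0,...,T} → ℝ with h⁻ = min h > 0, p : {0,...,T} → ℝ with p⁻ = min p > 1, and suppose f satisfies the growth condition |f(k,x,u)| ≤ a(k)|x|^{q(k)} + b(k) with q(k) > 1. If p⁻ > q⁺ + 1 and λ > 0, then the functional J_u(x) = ∑_{k=1}^{T+1} (h(k-1)/p(k-1)) |Δx(k-1)|^{p(k-1)} − λ ∑_{k=1}^{T} F(k,x(k),u(k)) is coercive on H, i.e. J_u(x) → ∞ as ‖x‖ → ∞. -/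
/-!
The energy term is bounded below by a multiple of `‖x‖ ^ p⁻` minus a constant: each summand
`(h/p) |Δx| ^ p` dominates `c (|Δx| ^ p⁻ - 1)` with `c = min (h/p)`, and some increment `|Δx(k₀)|`
is at least `‖x‖ / √(T + 1)`. The potential term is bounded above by a multiple of `‖x‖ ^ (q⁺ + 1)`, because
`|x k| ≤ √(T + 1) ‖x‖` by telescoping and Cauchy–Schwarz, and integrating the growth bound over
`[0, x k]` costs one more power. Since `q⁺ + 1 < p⁻`, the first term wins.
-/

open Finset Filter Real

lemma sum_Icc_sub_pred (x : ℕ → ℝ) : ∀ k : ℕ, ∑ j ∈ Icc 1 k, (x j - x (j - 1)) = x k - x 0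
  | 0 => by simp
  | k + 1 => by
    rw [sum_Icc_succ_top (Nat.le_add_left 1 k), sum_Icc_sub_pred x k]
    simp

lemma sum_abs_le_sqrt_card_mul_sqrt_sum_sq {ι : Type*} (s : Finset ι) (g : ι → ℝ) :
    ∑ i ∈ s, |g i| ≤ √(#s : ℝ) * √(∑ i ∈ s, g i ^ 2) := by
  rw [← sqrt_mul (Nat.cast_nonneg _)]
  refine le_sqrt_of_sq_le ?_
  simpa only [sq_abs] using sq_sum_le_card_mul_sum_sq (s := s) (f := fun i => |g i|)

lemma sqrt_sum_sq_rpow_le {ι : Type*} {s : Finset ι} (hs : s.Nonempty) (g : ι → ℝ) {r : ℝ}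
    (hr : 0 ≤ r) :
    √(∑ i ∈ s, g i ^ 2) ^ r ≤ √(#s : ℝ) ^ r * ∑ i ∈ s, |g i| ^ r := by
  have hcard : (0 : ℝ) < #s := by exact_mod_cast hs.card_pos
  obtain ⟨i, hi, hgi⟩ : ∃ i ∈ s, (∑ j ∈ s, g j ^ 2) / #s ≤ g i ^ 2 := by
    refine exists_le_of_sum_le hs ?_
    rw [sum_const, nsmul_eq_mul, mul_div_cancel₀ _ hcard.ne']
  have hmax : √(∑ j ∈ s, g j ^ 2) ≤ √(#s : ℝ) * |g i| := by
    rw [← sqrt_sq_eq_abs, ← sqrt_mul hcard.le]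
    exact sqrt_le_sqrt ((div_le_iff₀' hcard).mp hgi)
  calc √(∑ j ∈ s, g j ^ 2) ^ r ≤ (√(#s : ℝ) * |g i|) ^ r := rpow_le_rpow (sqrt_nonneg _) hmax hr
    _ = √(#s : ℝ) ^ r * |g i| ^ r := mul_rpow (sqrt_nonneg _) (abs_nonneg _)
    _ ≤ √(#s : ℝ) ^ r * ∑ j ∈ s, |g j| ^ r := by
      gcongr
      exact single_le_sum (f := fun j => |g j| ^ r) (fun j _ => by positivity) hi

lemma abs_le_sqrt_mul_sqrt_sum_sq_sub_pred {x : ℕ → ℝ} (hx0 : x 0 = 0) {k n : ℕ} (hkn : k ≤ n) :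
    |x k| ≤ √(n : ℝ) * √(∑ j ∈ Icc 1 n, (x j - x (j - 1)) ^ 2) := by
  calc |x k| = |∑ j ∈ Icc 1 k, (x j - x (j - 1))| := by rw [sum_Icc_sub_pred, hx0, sub_zero]
    _ ≤ ∑ j ∈ Icc 1 k, |x j - x (j - 1)| := abs_sum_le_sum_abs _ _
    _ ≤ ∑ j ∈ Icc 1 n, |x j - x (j - 1)| :=
        sum_le_sum_of_subset_of_nonneg (Icc_subset_Icc_right hkn) fun _ _ _ => abs_nonneg _
    _ ≤ √(n : ℝ) * √(∑ j ∈ Icc 1 n, (x j - x (j - 1)) ^ 2) := by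
        simpa using sum_abs_le_sqrt_card_mul_sqrt_sum_sq (Icc 1 n) fun j => x j - x (j - 1)

lemma rpow_sub_one_le_rpow {t r e : ℝ} (ht : 0 ≤ t) (hr : 0 ≤ r) (hre : r ≤ e) :
    t ^ r - 1 ≤ t ^ e := by
  rcases le_or_gt 1 t with h1 | h1
  · linarith [rpow_le_rpow_of_exponent_le h1 hre]
  · linarith [rpow_le_one ht h1.le hr, rpow_nonneg ht e]

lemma le_sum_mul_abs_rpow {ι : Type*} {s : Finset ι} (hs : s.Nonempty) {g w e : ι → ℝ}
    {c r : ℝ} (hc : 0 ≤ c) (hr : 0 ≤ r) (hw : ∀ i ∈ s, c ≤ w i) (he : ∀ i ∈ s, r ≤ e i) :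
    c / √(#s : ℝ) ^ r * √(∑ i ∈ s, g i ^ 2) ^ r - c * #s ≤ ∑ i ∈ s, w i * |g i| ^ e i := by
  have hsqrt : 0 < √(#s : ℝ) ^ r := rpow_pos_of_pos (sqrt_pos.mpr (by exact_mod_cast hs.card_pos)) r
  calc c / √(#s : ℝ) ^ r * √(∑ i ∈ s, g i ^ 2) ^ r - c * #s
      ≤ c * ∑ i ∈ s, |g i| ^ r - c * #s := by
        have := mul_le_mul_of_nonneg_left (sqrt_sum_sq_rpow_le hs g hr) (div_nonneg hc hsqrt.le)
        rw [← mul_assoc, div_mul_cancel₀ _ hsqrt.ne'] at this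
        linarith
    _ = ∑ i ∈ s, c * (|g i| ^ r - 1) := by
        rw [← mul_sum, sum_sub_distrib, sum_const, nsmul_one, mul_sub]
    _ ≤ ∑ i ∈ s, w i * |g i| ^ e i := by
        refine sum_le_sum fun i hi => ?_
        calc c * (|g i| ^ r - 1) ≤ c * |g i| ^ e i :=
              mul_le_mul_of_nonneg_left (rpow_sub_one_le_rpow (abs_nonneg _) hr (he i hi)) hc
          _ ≤ w i * |g i| ^ e i := mul_le_mul_of_nonneg_right (hw i hi) (by positivity)

lemma growth_le_mul_rpow {a b q Q R t : ℝ} (ha : 0 ≤ a) (hb : 0 ≤ b) (hq : 0 ≤ q)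
    (hqQ : q ≤ Q) (hR : 1 ≤ R) (ht : |t| ≤ R) :
    a * |t| ^ q + b ≤ (a + b) * R ^ Q := by
  have hRq : |t| ^ q ≤ R ^ Q :=
    (rpow_le_rpow (abs_nonneg t) ht hq).trans (rpow_le_rpow_of_exponent_le hR hqQ)
  have hRQ : 1 ≤ R ^ Q := one_le_rpow hR (hq.trans hqQ)
  nlinarith

lemma intervalIntegral_le_of_growth {φ : ℝ → ℝ} {a b q Q R X : ℝ} (ha : 0 ≤ a) (hb : 0 ≤ b)
    (hq : 0 ≤ q) (hqQ : q ≤ Q) (hR : 1 ≤ R) (hX : |X| ≤ R)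
    (hφ : ∀ t, |φ t| ≤ a * |t| ^ q + b) :
    ∫ t in (0 : ℝ)..X, φ t ≤ (a + b) * R ^ (Q + 1) := by
  have hbound : ∀ t ∈ Set.uIoc 0 X, ‖φ t‖ ≤ (a + b) * R ^ Q := by
    intro t ht
    have htX : |t| ≤ |X| := by simpa using Set.abs_sub_left_of_mem_uIcc (Set.uIoc_subset_uIcc ht)
    exact (hφ t).trans (growth_le_mul_rpow ha hb hq hqQ hR (htX.trans hX))
  calc ∫ t in (0 : ℝ)..X, φ t ≤ ‖∫ t in (0 : ℝ)..X, φ t‖ := le_norm_self _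
    _ ≤ (a + b) * R ^ Q * |X - 0| := intervalIntegral.norm_integral_le_of_norm_le_const hbound
    _ ≤ (a + b) * R ^ Q * R := by rw [sub_zero]; gcongr
    _ = (a + b) * R ^ (Q + 1) := by rw [rpow_add_one (by positivity), mul_assoc]

lemma sum_intervalIntegral_le_of_growth {ι : Type*} {s : Finset ι} {φ : ι → ℝ → ℝ}
    {a b q X : ι → ℝ} {Q R : ℝ} (ha : ∀ i ∈ s, 0 ≤ a i) (hb : ∀ i ∈ s, 0 ≤ b i)
    (hq : ∀ i ∈ s, 0 ≤ q i) (hqQ : ∀ i ∈ s, q i ≤ Q) (hR : 1 ≤ R) (hX : ∀ i ∈ s, |X i| ≤ R)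
    (hφ : ∀ i ∈ s, ∀ t, |φ i t| ≤ a i * |t| ^ q i + b i) :
    ∑ i ∈ s, ∫ t in (0 : ℝ)..X i, φ i t ≤ (∑ i ∈ s, (a i + b i)) * R ^ (Q + 1) := by
  rw [sum_mul]
  exact sum_le_sum fun i hi => intervalIntegral_le_of_growth (ha i hi) (hb i hi) (hq i hi)
    (hqQ i hi) hR (hX i hi) (hφ i hi)

lemma tendsto_mul_rpow_sub_mul_rpow_atTop {c₁ r s : ℝ} (hc₁ : 0 < c₁) (hr : 0 < r) (hrs : r < s)
    (c₂ c₃ : ℝ) : Tendsto (fun N : ℝ => c₁ * N ^ s - c₂ - c₃ * N ^ r) atTop atTop := by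
  have hfactor : (fun N : ℝ => N ^ r * (c₁ * N ^ (s - r) - c₃) - c₂) =ᶠ[atTop]
      fun N => c₁ * N ^ s - c₂ - c₃ * N ^ r := by
    filter_upwards [eventually_gt_atTop 0] with N hN
    rw [mul_sub, ← mul_assoc, mul_comm (N ^ r) c₁, mul_assoc, ← rpow_add hN, add_sub_cancel]
    ring
  refine Tendsto.congr' hfactor (tendsto_atTop_add_const_right _ _ ?_)
  refine (tendsto_rpow_atTop hr).atTop_mul_atTop₀ (tendsto_atTop_add_const_right _ _ ?_)
  exact (tendsto_rpow_atTop (sub_pos.mpr hrs)).const_mul_atTop hc₁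

theorem stmt8_general (T : ℕ) (hT : 1 ≤ T)
    (h p : ℕ → ℝ) (hh : ∀ k ∈ Finset.Icc 0 T, 0 < h k) (hp : ∀ k ∈ Finset.Icc 0 T, 1 < p k)
    (pm : ℝ) (hpm : pm = (Finset.Icc 0 T).inf' (Finset.nonempty_Icc.mpr (Nat.zero_le T)) p)
    (f : ℕ → ℝ → ℝ → ℝ) (a b q : ℕ → ℝ)
    (ha : ∀ k ∈ Finset.Icc 1 T, 0 ≤ a k) (hb : ∀ k ∈ Finset.Icc 1 T, 0 ≤ b k)
    (hq : ∀ k ∈ Finset.Icc 1 T, 1 < q k)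
    (hgrowth : ∀ k ∈ Finset.Icc 1 T, ∀ t v : ℝ, |f k t v| ≤ a k * |t| ^ q k + b k)
    (qP : ℝ) (hqP : qP = (Finset.Icc 1 T).sup' (Finset.nonempty_Icc.mpr hT) q)
    (hexp : qP + 1 < pm)
    (lam : ℝ) (hlam : 0 < lam) (u : ℕ → ℝ) :
    ∀ M : ℝ, ∃ R : ℝ, ∀ x : ℕ → ℝ, x 0 = 0 → x (T + 1) = 0 →
      R ≤ (∑ k ∈ Finset.Icc 1 (T + 1), (x k - x (k - 1)) ^ 2) ^ ((1 : ℝ) / 2) →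
      M ≤ ∑ k ∈ Finset.Icc 1 (T + 1), h (k - 1) / p (k - 1) * |x k - x (k - 1)| ^ p (k - 1) -
            lam * ∑ k ∈ Finset.Icc 1 T, ∫ t in (0 : ℝ)..(x k), f k t (u k) := by
  intro M
  have hne : (Icc 0 T).Nonempty := nonempty_Icc.mpr (Nat.zero_le T)
  set c := (Icc 0 T).inf' hne fun k => h k / p k
  have hc : 0 < c := (lt_inf'_iff hne).mpr fun k hk => div_pos (hh k hk) (by linarith [hp k hk])
  have hpm_nonneg : 0 ≤ pm := hpm ▸ le_inf' hne p fun k hk => by linarith [hp k hk]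
  have hqP_pos : 0 < qP + 1 := by
    have h1 : 1 ∈ Icc 1 T := left_mem_Icc.mpr hT
    linarith [hq 1 h1, hqP ▸ le_sup' q h1]
  set D := √((T : ℝ) + 1)
  have hD : 1 ≤ D := one_le_sqrt.mpr (by linarith [(Nat.cast_nonneg T : (0 : ℝ) ≤ T)])
  set A := ∑ k ∈ Icc 1 T, (a k + b k)
  have hcD : 0 < c / D ^ pm := div_pos hc (by positivity)
  obtain ⟨R, hR⟩ := tendsto_atTop_atTop.mp (tendsto_mul_rpow_sub_mul_rpow_atTop hcD hqP_pos hexp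
    (c * (T + 1)) (lam * A * D ^ (qP + 1))) M
  refine ⟨max 1 R, fun x hx0 _ hN => ?_⟩
  rw [← sqrt_eq_rpow] at hN
  set N := √(∑ k ∈ Icc 1 (T + 1), (x k - x (k - 1)) ^ 2)
  have hDN : 1 ≤ D * N := one_le_mul_of_one_le_of_one_le hD (le_of_max_le_left hN)
  have hlower : c / D ^ pm * N ^ pm - c * (T + 1) ≤
      ∑ k ∈ Icc 1 (T + 1), h (k - 1) / p (k - 1) * |x k - x (k - 1)| ^ p (k - 1) := by
    have hmem : ∀ k ∈ Icc 1 (T + 1), k - 1 ∈ Icc 0 T := fun k hk => by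
      simp only [mem_Icc] at hk ⊢; omega
    simpa using le_sum_mul_abs_rpow (s := Icc 1 (T + 1)) (nonempty_Icc.mpr (by omega))
      hc.le hpm_nonneg (fun k hk => inf'_le _ (hmem k hk)) fun k hk => hpm ▸ inf'_le p (hmem k hk)
  have hupper : ∑ k ∈ Icc 1 T, ∫ t in (0 : ℝ)..(x k), f k t (u k) ≤ A * (D * N) ^ (qP + 1) := by
    refine sum_intervalIntegral_le_of_growth ha hb (fun k hk => (zero_lt_one.trans (hq k hk)).le)
      (fun k hk => hqP ▸ le_sup' q hk) hDN (fun k hk => ?_) fun k hk t => hgrowth k hk t (u k)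
    have hkT : k ≤ T + 1 := by simp only [mem_Icc] at hk; omega
    simpa only [Nat.cast_add_one] using abs_le_sqrt_mul_sqrt_sum_sq_sub_pred hx0 hkT
  rw [mul_rpow (by positivity) (by positivity)] at hupper
  linarith [hR N (le_of_max_le_right hN), mul_le_mul_of_nonneg_left hupper hlam.le]

theorem stmt8 (T : ℕ) (hT : 1 ≤ T)
    (h p : ℕ → ℝ) (hh : ∀ k ∈ Finset.Icc 0 T, 0 < h k) (hp : ∀ k ∈ Finset.Icc 0 T, 1 < p k)
    (pm : ℝ) (hpm : pm = (Finset.Icc 0 T).inf' (Finset.nonempty_Icc.mpr (Nat.zero_le T)) p)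
    (f : ℕ → ℝ → ℝ → ℝ) (hcont : ∀ k v, Continuous fun t => f k t v)
    (a b q : ℕ → ℝ)
    (ha : ∀ k ∈ Finset.Icc 1 T, 0 ≤ a k) (hb : ∀ k ∈ Finset.Icc 1 T, 0 ≤ b k)
    (hq : ∀ k ∈ Finset.Icc 1 T, 1 < q k)
    (hgrowth : ∀ k ∈ Finset.Icc 1 T, ∀ t v : ℝ, |f k t v| ≤ a k * |t| ^ q k + b k)
    (qP : ℝ) (hqP : qP = (Finset.Icc 1 T).sup' (Finset.nonempty_Icc.mpr hT) q)
    (hexp : qP + 1 < pm)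
    (lam : ℝ) (hlam : 0 < lam) (u : ℕ → ℝ) :
    ∀ M : ℝ, ∃ R : ℝ, ∀ x : ℕ → ℝ, x 0 = 0 → x (T + 1) = 0 →
      R ≤ (∑ k ∈ Finset.Icc 1 (T + 1), (x k - x (k - 1)) ^ 2) ^ ((1 : ℝ) / 2) →
      M ≤ ∑ k ∈ Finset.Icc 1 (T + 1), h (k - 1) / p (k - 1) * |x k - x (k - 1)| ^ p (k - 1) -
            lam * ∑ k ∈ Finset.Icc 1 T, ∫ t in (0 : ℝ)..(x k), f k t (u k) :=
  stmt8_general T hT h p hh hp pm hpm f a b q ha hb hq hgrowth qP hqP hexp lam hlam u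
end

section
/- With the notation of the anisotropic discrete problem, if p⁻ = q⁺ + 1 and 0 < λ < C₁h⁻(q⁻+1)/(p⁺ a⁺ c_{q⁺+1}), then J_u(x) = ∑_{k=1}^{T+1} (h(k-1)/p(k-1)) |Δx(k-1)|^{p(k-1)} − λ ∑_{k=1}^{T} F(k,x(k),u(k)) is coercive on H. -/
/-!
For `‖x‖ ≥ 1` the gradient term is at least `(h⁻/p⁺)(C₁‖x‖^{p⁻} - C₂)`. Integrating the growth
bound gives `|F(k,v)| ≤ a⁺/(q⁻+1) (|v|^{q⁺+1} + 1) + b⁺|v|`; the discrete Poincaré inequality and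
`‖Δx‖_{ℓ^{p⁻}} ≤ ‖Δx‖_{ℓ²}` (as `p⁻ = q⁺ + 1 ≥ 2`) bound `∑ |x(k)|^{q⁺+1}` by `c_{q⁺+1}‖x‖^{p⁻}`,
and `|x(k)| ≤ (T+1)‖x‖`. Hence `J_u(x) ≥ ε‖x‖^{p⁻} - c‖x‖ - d` with
`ε = C₁h⁻/p⁺ - λa⁺c_{q⁺+1}/(q⁻+1)`, which is positive exactly by the smallness of `λ`;
since `p⁻ > 1` the right-hand side tends to infinity.
-/

open Finset Filter

lemma Real.sum_rpow_le_rpow_sum {ι : Type*} (s : Finset ι) {g : ι → ℝ}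
    (hg : ∀ i ∈ s, 0 ≤ g i) {e : ℝ} (he : 1 ≤ e) : ∑ i ∈ s, g i ^ e ≤ (∑ i ∈ s, g i) ^ e := by
  induction s using Finset.cons_induction with
  | empty => simp [Real.zero_rpow (by linarith : e ≠ 0)]
  | cons i s _ ih =>
    have hs : ∀ j ∈ s, 0 ≤ g j := fun j hj => hg j (mem_cons_of_mem hj)
    rw [sum_cons, sum_cons]
    calc g i ^ e + ∑ j ∈ s, g j ^ e ≤ g i ^ e + (∑ j ∈ s, g j) ^ e := by
          gcongr; exact ih hs
      _ ≤ _ := Real.add_rpow_le_rpow_add (hg i (mem_cons_self i s)) (sum_nonneg hs) he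

lemma Real.rpow_le_rpow_add_one {y a b : ℝ} (hy : 0 ≤ y) (ha : 0 ≤ a) (hab : a ≤ b) :
    y ^ a ≤ y ^ b + 1 := by
  rcases le_or_gt y 1 with h1 | h1
  · linarith [Real.rpow_le_one hy h1 ha, Real.rpow_nonneg hy b]
  · linarith [Real.rpow_le_rpow_of_exponent_le h1.le hab]

lemma mul_sum_le_sum_mul {ι : Type*} {s : Finset ι} {c : ℝ} {w g : ι → ℝ}
    (hw : ∀ i ∈ s, c ≤ w i) (hg : ∀ i ∈ s, 0 ≤ g i) :
    c * ∑ i ∈ s, g i ≤ ∑ i ∈ s, w i * g i := by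
  rw [mul_sum]
  exact sum_le_sum fun i hi => mul_le_mul_of_nonneg_right (hw i hi) (hg i hi)

lemma sub_mul_div_pos_of_lt_div {C P a c Q lam : ℝ} (hP : 0 < P) (ha : 0 ≤ a) (hc : 0 < c)
    (hQ : 0 < Q) (hlam0 : 0 < lam) (hlam : lam < C * Q / (P * a * c)) :
    0 < C / P - lam * (a * c / Q) := by
  -- with `a = 0` the bound `hlam` would read `lam < 0`, since `x / 0 = 0`
  have ha : 0 < a := ha.lt_of_ne fun h0 => by
    rw [← h0, mul_zero, zero_mul, div_zero] at hlam
    linarith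
  rw [lt_div_iff₀ (by positivity)] at hlam
  rw [sub_pos, ← mul_div_assoc, div_lt_div_iff₀ hQ hP]
  linarith

lemma exists_forall_ge_le_mul_rpow_sub {ε e : ℝ} (hε : 0 < ε) (he : 1 < e) (c d M : ℝ) :
    ∃ R, ∀ r ≥ R, M ≤ ε * r ^ e - c * r - d := by
  have hlim : Tendsto (fun r : ℝ => r * (ε * r ^ (e - 1) + -c) + -d) atTop atTop :=
    tendsto_atTop_add_const_right _ _ <| tendsto_id.atTop_mul_atTop₀ <|
      tendsto_atTop_add_const_right _ _ <| (tendsto_rpow_atTop (by linarith)).const_mul_atTop hε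
  obtain ⟨R, hR⟩ :=
    eventually_atTop.1 ((hlim.eventually_ge_atTop M).and (eventually_gt_atTop 0))
  refine ⟨R, fun r hr => ?_⟩
  obtain ⟨hM, hr0⟩ := hR r hr
  rw [Real.rpow_sub_one hr0.ne'] at hM
  calc M ≤ r * (ε * (r ^ e / r) + -c) + -d := hM
    _ = ε * r ^ e - c * r - d := by field_simp; ring

lemma abs_integral_le_of_abs_le_rpow_of_nonneg {g : ℝ → ℝ} {A B Q : ℝ} (hQ : -1 < Q)
    (hg : ∀ t, |g t| ≤ A * |t| ^ Q + B) {v : ℝ} (hv : 0 ≤ v) :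
    |∫ t in (0 : ℝ)..v, g t| ≤ A / (Q + 1) * v ^ (Q + 1) + B * v := by
  have hint : IntervalIntegrable (fun t : ℝ => A * t ^ Q) MeasureTheory.volume 0 v :=
    (intervalIntegral.intervalIntegrable_rpow' hQ).const_mul A
  calc |∫ t in (0 : ℝ)..v, g t| ≤ ∫ t in (0 : ℝ)..v, (A * t ^ Q + B) :=
        intervalIntegral.norm_integral_le_of_norm_le (f := g) hv
          (MeasureTheory.ae_of_all _ fun t ht => by simpa [abs_of_pos ht.1] using hg t)
          (hint.add intervalIntegrable_const)
    _ = A / (Q + 1) * v ^ (Q + 1) + B * v := by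
        rw [intervalIntegral.integral_add hint intervalIntegrable_const,
          intervalIntegral.integral_const_mul, integral_rpow (Or.inl hQ),
          intervalIntegral.integral_const, Real.zero_rpow (by linarith), smul_eq_mul]
        ring

lemma abs_integral_le_of_abs_le_rpow {g : ℝ → ℝ} {A B Q : ℝ} (hQ : -1 < Q)
    (hg : ∀ t, |g t| ≤ A * |t| ^ Q + B) (v : ℝ) :
    |∫ t in (0 : ℝ)..v, g t| ≤ A / (Q + 1) * |v| ^ (Q + 1) + B * |v| := by
  rcases le_or_gt 0 v with hv | hv
  · rw [abs_of_nonneg hv]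
    exact abs_integral_le_of_abs_le_rpow_of_nonneg hQ hg hv
  · have hreflect := abs_integral_le_of_abs_le_rpow_of_nonneg hQ (g := fun t => g (-t))
      (fun t => by simpa using hg (-t)) (neg_nonneg.2 hv.le)
    rw [intervalIntegral.integral_comp_neg, neg_zero, neg_neg, intervalIntegral.integral_symm,
      abs_neg] at hreflect
    rwa [abs_of_neg hv]

lemma integral_le_of_abs_le_rpow {g : ℝ → ℝ} {A B Q A' B' Q₁ Q₂ : ℝ} (hA : 0 ≤ A)
    (hAA' : A ≤ A') (hBB' : B ≤ B') (hQ₁ : -1 < Q₁) (hQ₁Q : Q₁ ≤ Q) (hQQ₂ : Q ≤ Q₂)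
    (hg : ∀ t, |g t| ≤ A * |t| ^ Q + B) (v : ℝ) :
    ∫ t in (0 : ℝ)..v, g t ≤ A' / (Q₁ + 1) * (|v| ^ (Q₂ + 1) + 1) + B' * |v| := by
  have hcoef : A / (Q + 1) ≤ A' / (Q₁ + 1) :=
    div_le_div₀ (hA.trans hAA') hAA' (by linarith) (by linarith)
  have hpow : |v| ^ (Q + 1) ≤ |v| ^ (Q₂ + 1) + 1 :=
    Real.rpow_le_rpow_add_one (abs_nonneg v) (by linarith) (by linarith)
  calc ∫ t in (0 : ℝ)..v, g t ≤ A / (Q + 1) * |v| ^ (Q + 1) + B * |v| :=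
        (le_abs_self _).trans (abs_integral_le_of_abs_le_rpow (by linarith) hg v)
    _ ≤ _ := add_le_add
        (mul_le_mul hcoef hpow (Real.rpow_nonneg (abs_nonneg v) _)
          (div_nonneg (hA.trans hAA') (by linarith)))
        (mul_le_mul_of_nonneg_right hBB' (abs_nonneg v))

/-- The norm `‖x‖` of `H`. -/
noncomputable def diffNorm (T : ℕ) (x : ℕ → ℝ) : ℝ :=
  (∑ k ∈ Icc 1 (T + 1), (x k - x (k - 1)) ^ 2) ^ ((1 : ℝ) / 2)

section diffNorm

variable {T : ℕ} {x : ℕ → ℝ}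

lemma diffNorm_nonneg : 0 ≤ diffNorm T x :=
  Real.rpow_nonneg (sum_nonneg fun _ _ => sq_nonneg _) _

lemma abs_sub_le_diffNorm {k : ℕ} (hk : k ∈ Icc 1 (T + 1)) :
    |x k - x (k - 1)| ≤ diffNorm T x := by
  rw [diffNorm, ← Real.sqrt_eq_rpow, ← Real.sqrt_sq_eq_abs]
  exact Real.sqrt_le_sqrt
    (single_le_sum (f := fun j => (x j - x (j - 1)) ^ 2) (fun _ _ => sq_nonneg _) hk)

lemma abs_le_mul_diffNorm (hx0 : x 0 = 0) : ∀ k ≤ T + 1, |x k| ≤ k * diffNorm T x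
  | 0, _ => by simp [hx0]
  | k + 1, hk => by
    have hstep := abs_sub_le_diffNorm (x := x) (mem_Icc.2 ⟨by omega, hk⟩)
    rw [Nat.add_sub_cancel] at hstep
    push_cast
    linarith [abs_le_mul_diffNorm hx0 k (by omega), abs_sub_abs_le_abs_sub (x (k + 1)) (x k)]

lemma sum_abs_sub_rpow_le_diffNorm_rpow {e : ℝ} (he : 2 ≤ e) :
    ∑ k ∈ Icc 1 (T + 1), |x k - x (k - 1)| ^ e ≤ diffNorm T x ^ e := by
  have hsq : ∀ d : ℝ, |d| ^ e = (d ^ 2) ^ (e / 2) := fun d => by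
    rw [← sq_abs, ← Real.rpow_natCast, ← Real.rpow_mul (abs_nonneg d)]
    ring_nf
  simp only [hsq]
  calc ∑ k ∈ Icc 1 (T + 1), ((x k - x (k - 1)) ^ 2) ^ (e / 2)
      ≤ (∑ k ∈ Icc 1 (T + 1), (x k - x (k - 1)) ^ 2) ^ (e / 2) :=
        Real.sum_rpow_le_rpow_sum _ (fun _ _ => sq_nonneg _) (by linarith)
    _ = diffNorm T x ^ e := by
        rw [diffNorm, ← Real.rpow_mul (sum_nonneg fun _ _ => sq_nonneg _)]
        ring_nf

lemma mul_sub_le_sum_mul_abs_sub_rpow {w p : ℕ → ℝ} {c C₁ C₂ e : ℝ}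
    (hw : ∀ k ∈ Icc 0 T, c ≤ w k) (hc : 0 ≤ c)
    (hcoerc : C₁ * diffNorm T x ^ e - C₂ ≤
      ∑ k ∈ Icc 1 (T + 1), |x k - x (k - 1)| ^ p (k - 1)) :
    c * (C₁ * diffNorm T x ^ e - C₂) ≤
      ∑ k ∈ Icc 1 (T + 1), w (k - 1) * |x k - x (k - 1)| ^ p (k - 1) :=
  (mul_le_mul_of_nonneg_left hcoerc hc).trans <|
    mul_sum_le_sum_mul (fun k hk => hw (k - 1) (by simp only [mem_Icc] at hk ⊢; omega))
      fun _ _ => Real.rpow_nonneg (abs_nonneg _) _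

lemma sum_le_of_le_rpow_add_one (hx0 : x 0 = 0) {F : ℕ → ℝ → ℝ} {α β c e : ℝ}
    (hα : 0 ≤ α) (hβ : 0 ≤ β) (hc : 0 ≤ c) (he : 2 ≤ e)
    (hF : ∀ k ∈ Icc 1 T, ∀ v, F k v ≤ α * (|v| ^ e + 1) + β * |v|)
    (hpoinc : ∑ k ∈ Icc 1 T, |x k| ^ e ≤ c * ∑ k ∈ Icc 1 (T + 1), |x k - x (k - 1)| ^ e) :
    ∑ k ∈ Icc 1 T, F k (x k) ≤
      α * (c * diffNorm T x ^ e + T) + β * (T * ((T + 1) * diffNorm T x)) := by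
  have hx : ∀ k ∈ Icc 1 T, |x k| ≤ (T + 1) * diffNorm T x := fun k hk => by
    have hkT := (mem_Icc.1 hk).2
    refine (abs_le_mul_diffNorm (T := T) hx0 k (by omega)).trans ?_
    gcongr
    · exact diffNorm_nonneg
    · exact_mod_cast Nat.le_succ_of_le hkT
  calc ∑ k ∈ Icc 1 T, F k (x k) ≤ ∑ k ∈ Icc 1 T, (α * (|x k| ^ e + 1) + β * |x k|) :=
        sum_le_sum fun k hk => hF k hk (x k)
    _ = α * (∑ k ∈ Icc 1 T, |x k| ^ e + T) + β * ∑ k ∈ Icc 1 T, |x k| := by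
        simp only [sum_add_distrib, ← mul_sum, sum_const, Nat.card_Icc, nsmul_eq_mul, mul_one,
          Nat.add_sub_cancel]
    _ ≤ _ := by
        gcongr
        · exact hpoinc.trans (by gcongr; exact sum_abs_sub_rpow_le_diffNorm_rpow he)
        · simpa using sum_le_card_nsmul _ _ _ hx

end diffNorm

theorem stmt9_general (T : ℕ) (hT : 1 ≤ T)
    (h p : ℕ → ℝ) (hh : ∀ k ∈ Finset.Icc 0 T, 0 < h k) (hp : ∀ k ∈ Finset.Icc 0 T, 1 < p k)
    (hm pm pP : ℝ)
    (hhm : hm = (Finset.Icc 0 T).inf' (Finset.nonempty_Icc.mpr (Nat.zero_le T)) h)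
    (hpP : pP = (Finset.Icc 0 T).sup' (Finset.nonempty_Icc.mpr (Nat.zero_le T)) p)
    (f : ℕ → ℝ → ℝ → ℝ)
    (a b q : ℕ → ℝ)
    (ha : ∀ k ∈ Finset.Icc 1 T, 0 ≤ a k) (hb : ∀ k ∈ Finset.Icc 1 T, 0 ≤ b k)
    (hq : ∀ k ∈ Finset.Icc 1 T, 1 < q k)
    (hgrowth : ∀ k ∈ Finset.Icc 1 T, ∀ t v : ℝ, |f k t v| ≤ a k * |t| ^ q k + b k)
    (aP qP qm : ℝ)
    (haP : aP = (Finset.Icc 1 T).sup' (Finset.nonempty_Icc.mpr hT) a)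
    (hqP : qP = (Finset.Icc 1 T).sup' (Finset.nonempty_Icc.mpr hT) q)
    (hqm : qm = (Finset.Icc 1 T).inf' (Finset.nonempty_Icc.mpr hT) q)
    (C₁ C₂ : ℝ)
    (hcoerc : ∀ x : ℕ → ℝ, x 0 = 0 → x (T + 1) = 0 →
      1 ≤ (∑ k ∈ Finset.Icc 1 (T + 1), (x k - x (k - 1)) ^ 2) ^ ((1 : ℝ) / 2) →
      C₁ * ((∑ k ∈ Finset.Icc 1 (T + 1), (x k - x (k - 1)) ^ 2) ^ ((1 : ℝ) / 2)) ^ pm - C₂ ≤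
        ∑ k ∈ Finset.Icc 1 (T + 1), |x k - x (k - 1)| ^ p (k - 1))
    (cQ : ℝ) (hcQpos : 0 < cQ)
    (hcQ : ∀ x : ℕ → ℝ, x 0 = 0 → x (T + 1) = 0 →
      ∑ k ∈ Finset.Icc 1 T, |x k| ^ (qP + 1) ≤
        cQ * ∑ k ∈ Finset.Icc 1 (T + 1), |x k - x (k - 1)| ^ (qP + 1))
    (hexp : pm = qP + 1)
    (lam : ℝ) (hlam0 : 0 < lam) (hlam : lam < C₁ * hm * (qm + 1) / (pP * aP * cQ))
    (u : ℕ → ℝ) :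
    ∀ M : ℝ, ∃ R : ℝ, ∀ x : ℕ → ℝ, x 0 = 0 → x (T + 1) = 0 →
      R ≤ (∑ k ∈ Finset.Icc 1 (T + 1), (x k - x (k - 1)) ^ 2) ^ ((1 : ℝ) / 2) →
      M ≤ ∑ k ∈ Finset.Icc 1 (T + 1), h (k - 1) / p (k - 1) * |x k - x (k - 1)| ^ p (k - 1) -
            lam * ∑ k ∈ Finset.Icc 1 T, ∫ t in (0 : ℝ)..(x k), f k t (u k) := by
  intro M
  have hpP1 : 1 < pP := hpP ▸ (hp 0 (by simp)).trans_le (le_sup' p (by simp))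
  have hhm0 : 0 ≤ hm := hhm ▸ (le_inf'_iff _ _).2 fun k hk => (hh k hk).le
  have hqm1 : -1 < qm := hqm ▸ (lt_inf'_iff _).2 fun k hk => by linarith [hq k hk]
  have hqP1 : 1 ≤ qP := hqP ▸ (hq 1 (by simp [hT])).le.trans (le_sup' q (by simp [hT]))
  have haP0 : 0 ≤ aP := haP ▸ (ha 1 (by simp [hT])).trans (le_sup' a (by simp [hT]))
  set bP := (Icc 1 T).sup' (nonempty_Icc.mpr hT) b
  have hbP0 : 0 ≤ bP := (hb 1 (by simp [hT])).trans (le_sup' b (by simp [hT]))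
  have hε : 0 < C₁ * hm / pP - lam * (aP * cQ / (qm + 1)) :=
    sub_mul_div_pos_of_lt_div (by linarith) haP0 hcQpos (by linarith) hlam0 hlam
  have hF : ∀ k ∈ Icc 1 T, ∀ v, ∫ t in (0 : ℝ)..v, f k t (u k) ≤
      aP / (qm + 1) * (|v| ^ (qP + 1) + 1) + bP * |v| := fun k hk v =>
    integral_le_of_abs_le_rpow (ha k hk) (haP ▸ le_sup' a hk) (le_sup' b hk) hqm1
      (hqm ▸ inf'_le q hk) (hqP ▸ le_sup' q hk) (fun t => hgrowth k hk t (u k)) v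
  obtain ⟨R, hR⟩ := exists_forall_ge_le_mul_rpow_sub hε (show 1 < pm by linarith)
    (lam * bP * (T * (T + 1))) (hm / pP * C₂ + lam * (aP / (qm + 1) * T)) M
  refine ⟨max 1 R, fun x hx0 hxT hr => ?_⟩
  have hgrad := mul_sub_le_sum_mul_abs_sub_rpow (w := fun k => h k / p k)
    (fun k hk => div_le_div₀ (hh k hk).le (hhm ▸ inf'_le h hk) (by linarith [hp k hk])
      (hpP ▸ le_sup' p hk))
    (by positivity) (hcoerc x hx0 hxT (le_of_max_le_left hr))
  have hnonlin := sum_le_of_le_rpow_add_one hx0 (div_nonneg haP0 (by linarith)) hbP0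
    hcQpos.le (by linarith) hF (hcQ x hx0 hxT)
  rw [← hexp] at hnonlin
  calc M ≤ (C₁ * hm / pP - lam * (aP * cQ / (qm + 1))) * diffNorm T x ^ pm
        - lam * bP * (T * (T + 1)) * diffNorm T x - (hm / pP * C₂ + lam * (aP / (qm + 1) * T)) :=
        hR _ (le_of_max_le_right hr)
    _ = hm / pP * (C₁ * diffNorm T x ^ pm - C₂) - lam * (aP / (qm + 1) *
          (cQ * diffNorm T x ^ pm + T) + bP * (T * ((T + 1) * diffNorm T x))) := by ring
    _ ≤ _ := sub_le_sub hgrad (mul_le_mul_of_nonneg_left hnonlin hlam0.le)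

theorem stmt9 (T : ℕ) (hT : 1 ≤ T)
    (h p : ℕ → ℝ) (hh : ∀ k ∈ Finset.Icc 0 T, 0 < h k) (hp : ∀ k ∈ Finset.Icc 0 T, 1 < p k)
    (hm pm pP : ℝ)
    (hhm : hm = (Finset.Icc 0 T).inf' (Finset.nonempty_Icc.mpr (Nat.zero_le T)) h)
    (hpm : pm = (Finset.Icc 0 T).inf' (Finset.nonempty_Icc.mpr (Nat.zero_le T)) p)
    (hpP : pP = (Finset.Icc 0 T).sup' (Finset.nonempty_Icc.mpr (Nat.zero_le T)) p)
    (f : ℕ → ℝ → ℝ → ℝ) (hcont : ∀ k v, Continuous fun t => f k t v)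
    (a b q : ℕ → ℝ)
    (ha : ∀ k ∈ Finset.Icc 1 T, 0 ≤ a k) (hb : ∀ k ∈ Finset.Icc 1 T, 0 ≤ b k)
    (hq : ∀ k ∈ Finset.Icc 1 T, 1 < q k)
    (hgrowth : ∀ k ∈ Finset.Icc 1 T, ∀ t v : ℝ, |f k t v| ≤ a k * |t| ^ q k + b k)
    (aP qP qm : ℝ)
    (haP : aP = (Finset.Icc 1 T).sup' (Finset.nonempty_Icc.mpr hT) a)
    (hqP : qP = (Finset.Icc 1 T).sup' (Finset.nonempty_Icc.mpr hT) q)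
    (hqm : qm = (Finset.Icc 1 T).inf' (Finset.nonempty_Icc.mpr hT) q)
    (C₁ C₂ : ℝ) (hC₁ : 0 < C₁) (hC₂ : 0 < C₂)
    (hcoerc : ∀ x : ℕ → ℝ, x 0 = 0 → x (T + 1) = 0 →
      1 ≤ (∑ k ∈ Finset.Icc 1 (T + 1), (x k - x (k - 1)) ^ 2) ^ ((1 : ℝ) / 2) →
      C₁ * ((∑ k ∈ Finset.Icc 1 (T + 1), (x k - x (k - 1)) ^ 2) ^ ((1 : ℝ) / 2)) ^ pm - C₂ ≤
        ∑ k ∈ Finset.Icc 1 (T + 1), |x k - x (k - 1)| ^ p (k - 1))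
    (cQ : ℝ) (hcQpos : 0 < cQ)
    (hcQ : ∀ x : ℕ → ℝ, x 0 = 0 → x (T + 1) = 0 →
      ∑ k ∈ Finset.Icc 1 T, |x k| ^ (qP + 1) ≤
        cQ * ∑ k ∈ Finset.Icc 1 (T + 1), |x k - x (k - 1)| ^ (qP + 1))
    (hexp : pm = qP + 1)
    (lam : ℝ) (hlam0 : 0 < lam) (hlam : lam < C₁ * hm * (qm + 1) / (pP * aP * cQ))
    (u : ℕ → ℝ) :
    ∀ M : ℝ, ∃ R : ℝ, ∀ x : ℕ → ℝ, x 0 = 0 → x (T + 1) = 0 →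
      R ≤ (∑ k ∈ Finset.Icc 1 (T + 1), (x k - x (k - 1)) ^ 2) ^ ((1 : ℝ) / 2) →
      M ≤ ∑ k ∈ Finset.Icc 1 (T + 1), h (k - 1) / p (k - 1) * |x k - x (k - 1)| ^ p (k - 1) -
            lam * ∑ k ∈ Finset.Icc 1 T, ∫ t in (0 : ℝ)..(x k), f k t (u k) :=
  stmt9_general T hT h p hh hp hm pm pP hhm hpP f a b q ha hb hq hgrowth aP qP qm haP hqP hqm C₁ C₂
    hcoerc cQ hcQpos hcQ hexp lam hlam0 hlam u
end

section
/- Assume H1, H2, H3 and the exponent/λ conditions of the main theorem. Let {u_n} be a sequence of parameter functions with u_n(k) → ū(k) for each k ∈ {1,...,T}, and let x_{u_n} denote the unique solution corresponding to u_n. Then there exists a subsequence {x_{u_{n_i}}} converging (pointwise on the finite discrete interval) to a function x̄ which solves the problem with parameter ū: −Δ(h(k-1)|Δx̄(k-1)|^{p(k-1)-2}Δx̄(k-1)) = λf(k,x̄(k),ū(k)) for k ∈ {1,...,T}, x̄(0) = x̄(T+1) = 0. -/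
/-!
Multiplying the equation by `x` and summing by parts gives the energy identity
`∑ h (k-1) |Δx (k-1)|^p(k-1) = λ ∑ f(k, x k, u k) x k`. As `f` is antitone in `t`,
`f(k, t, v) t ≤ f(k, 0, v) t ≤ (a k |0|^q k + b k) |t|`, so the right-hand side grows at most
linearly in `‖Δx‖₂`, whereas by coercivity the left-hand side grows like `‖Δx‖₂ ^ pm` with
`pm > 1`. Hence all solutions are uniformly bounded, Bolzano–Weierstrass in `ℝ^(T+2)` gives a
convergent subsequence, and the equation passes to the limit because `t ↦ |t|^(r-2) t` is
continuous for `r > 1`.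
-/

open Finset Filter Topology

theorem sum_Icc_mul_sub_eq (A X : ℕ → ℝ) (n : ℕ) :
    ∑ k ∈ Icc 1 (n + 1), A k * (X k - X (k - 1)) =
      ∑ k ∈ Icc 1 n, (A k - A (k + 1)) * X k + A (n + 1) * X (n + 1) - A 1 * X 0 := by
  induction n with
  | zero => simp [mul_sub]
  | succ n ih =>
    rw [sum_Icc_succ_top (by omega), ih, sum_Icc_succ_top (by omega)]
    simp only [Nat.add_sub_cancel]
    ring

theorem sum_Icc_sub_eq_sub (X : ℕ → ℝ) (n : ℕ) :
    ∑ k ∈ Icc 1 n, (X k - X (k - 1)) = X n - X 0 := by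
  induction n with
  | zero => simp
  | succ n ih => rw [sum_Icc_succ_top (by omega), ih, Nat.add_sub_cancel]; ring

theorem abs_rpow_sub_two_mul_mul_self {r : ℝ} (hr : r ≠ 0) (t : ℝ) :
    |t| ^ (r - 2) * t * t = |t| ^ r := by
  rcases eq_or_ne t 0 with rfl | ht
  · simp [Real.zero_rpow hr]
  · rw [mul_assoc, ← abs_mul_abs_self, ← sq, ← Real.rpow_natCast, ← Real.rpow_add (abs_pos.2 ht)]
    norm_num

theorem continuous_abs_rpow_sub_two_mul {r : ℝ} (hr : 1 < r) :
    Continuous fun t : ℝ => |t| ^ (r - 2) * t := by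
  refine continuous_iff_continuousAt.2 fun t => ?_
  rcases eq_or_ne t 0 with rfl | ht
  · have hnorm : ∀ s : ℝ, ‖|s| ^ (r - 2) * s‖ = |s| ^ (r - 1) := by
      intro s
      rcases eq_or_ne s 0 with rfl | hs
      · simp [Real.zero_rpow (by linarith : r - 1 ≠ 0)]
      · rw [Real.norm_eq_abs, abs_mul, abs_of_nonneg (Real.rpow_nonneg (abs_nonneg s) _),
          ← Real.rpow_add_one (abs_ne_zero.2 hs)]
        ring_nf
    have hlim : Tendsto (fun s : ℝ => |s| ^ (r - 1)) (𝓝 0) (𝓝 0) := by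
      simpa [Function.comp_def, Real.zero_rpow (by linarith : r - 1 ≠ 0)] using
        ((Real.continuous_rpow_const (by linarith : 0 ≤ r - 1)).comp continuous_abs).tendsto 0
    simpa [ContinuousAt] using squeeze_zero_norm (fun s => (hnorm s).le) hlim
  · exact ((continuous_abs.continuousAt.rpow_const (Or.inl (abs_ne_zero.2 ht))).mul
      continuousAt_id)

theorem Antitone.apply_mul_le_apply_zero_mul {g : ℝ → ℝ} (hg : Antitone g) (t : ℝ) :
    g t * t ≤ g 0 * t := by
  rcases le_total 0 t with ht | ht
  · exact mul_le_mul_of_nonneg_right (hg ht) ht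
  · exact mul_le_mul_of_nonpos_right (hg ht) ht

theorem le_rpow_inv_of_mul_rpow_le_add_mul {c r A B N : ℝ} (hc : 0 < c) (hr : 1 < r)
    (hN : 1 ≤ N) (h : c * N ^ r ≤ A + B * N) : N ≤ ((|A| + |B|) / c) ^ (r - 1)⁻¹ := by
  have hN0 : 0 < N := by linarith
  have hsplit : N ^ r = N ^ (r - 1) * N := by
    rw [← Real.rpow_add_one hN0.ne']; ring_nf
  have hAB : A + B * N ≤ (|A| + |B|) * N := by
    nlinarith [le_abs_self A, le_abs_self B, abs_nonneg A, abs_nonneg B]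
  have hpow : c * N ^ (r - 1) ≤ |A| + |B| := by
    rw [hsplit, ← mul_assoc] at h
    exact le_of_mul_le_mul_right (h.trans hAB) hN0
  rw [Real.le_rpow_inv_iff_of_pos hN0.le (by positivity) (by linarith), le_div_iff₀' hc]
  exact hpow

theorem abs_le_mul_sqrt_sum_sq_sub {X : ℕ → ℝ} (hX : X 0 = 0) {n k : ℕ} (hk : k ≤ n) :
    |X k| ≤ n * √(∑ j ∈ Icc 1 n, (X j - X (j - 1)) ^ 2) := by
  set N := √(∑ j ∈ Icc 1 n, (X j - X (j - 1)) ^ 2)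
  have hstep : ∀ j ∈ Icc 1 n, |X j - X (j - 1)| ≤ N := fun j hj =>
    Real.abs_le_sqrt (single_le_sum (f := fun j => (X j - X (j - 1)) ^ 2)
      (fun _ _ => sq_nonneg _) hj)
  calc |X k| = |∑ j ∈ Icc 1 k, (X j - X (j - 1))| := by
        rw [sum_Icc_sub_eq_sub, hX, sub_zero]
    _ ≤ ∑ j ∈ Icc 1 k, |X j - X (j - 1)| := abs_sum_le_sum_abs _ _
    _ ≤ ∑ j ∈ Icc 1 n, |X j - X (j - 1)| :=
        sum_le_sum_of_subset_of_nonneg (Icc_subset_Icc_right hk) fun _ _ _ => abs_nonneg _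
    _ ≤ ∑ j ∈ Icc 1 n, N := sum_le_sum hstep
    _ = n * N := by simp

theorem exists_strictMono_tendsto_of_abs_le {m : ℕ} {x : ℕ → ℕ → ℝ} {M : ℝ}
    (hx : ∀ n, ∀ k ≤ m, |x n k| ≤ M) :
    ∃ φ : ℕ → ℕ, StrictMono φ ∧ ∃ xbar : ℕ → ℝ,
      (∀ k ≤ m, Tendsto (fun i => x (φ i) k) atTop (𝓝 (xbar k))) ∧ ∀ k, m < k → xbar k = 0 := by
  have hmem : ∀ n, (fun k : Fin (m + 1) => x n k) ∈ Metric.closedBall 0 M := fun n => by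
    rw [mem_closedBall_zero_iff, pi_norm_le_iff_of_nonneg ((abs_nonneg _).trans (hx n 0 m.zero_le))]
    exact fun k => hx n k (Nat.lt_succ_iff.1 k.isLt)
  obtain ⟨a, -, φ, hφ, hlim⟩ := tendsto_subseq_of_bounded Metric.isBounded_closedBall hmem
  refine ⟨φ, hφ, fun k => if hk : k < m + 1 then a ⟨k, hk⟩ else 0, fun k hk => ?_,
    fun k hk => dif_neg (by omega)⟩
  simpa [Nat.lt_succ_iff.2 hk] using tendsto_pi_nhds.1 hlim ⟨k, Nat.lt_succ_iff.2 hk⟩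

def IsDirichletSolution (T : ℕ) (h p : ℕ → ℝ) (lam : ℝ) (f : ℕ → ℝ → ℝ → ℝ)
    (v x : ℕ → ℝ) : Prop :=
  x 0 = 0 ∧ x (T + 1) = 0 ∧ (∀ k, T + 1 < k → x k = 0) ∧
    ∀ k ∈ Icc 1 T,
      -(h k * |x (k + 1) - x k| ^ (p k - 2) * (x (k + 1) - x k) -
          h (k - 1) * |x k - x (k - 1)| ^ (p (k - 1) - 2) * (x k - x (k - 1))) =
        lam * f k (x k) (v k)

namespace IsDirichletSolution

variable {T : ℕ} {h p : ℕ → ℝ} {lam : ℝ} {f : ℕ → ℝ → ℝ → ℝ}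

theorem sum_energy_eq {v x : ℕ → ℝ} (hp : ∀ k ∈ Icc 0 T, p k ≠ 0)
    (hx : IsDirichletSolution T h p lam f v x) :
    ∑ k ∈ Icc 1 (T + 1), h (k - 1) * |x k - x (k - 1)| ^ p (k - 1) =
      lam * ∑ k ∈ Icc 1 T, f k (x k) (v k) * x k := by
  obtain ⟨hx0, hxT, -, heq⟩ := hx
  set A : ℕ → ℝ := fun k => h (k - 1) * |x k - x (k - 1)| ^ (p (k - 1) - 2) * (x k - x (k - 1))
  calc ∑ k ∈ Icc 1 (T + 1), h (k - 1) * |x k - x (k - 1)| ^ p (k - 1)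
      = ∑ k ∈ Icc 1 (T + 1), A k * (x k - x (k - 1)) := by
        refine sum_congr rfl fun k hk => ?_
        rw [mul_assoc, mul_assoc, ← mul_assoc _ (x k - _),
          abs_rpow_sub_two_mul_mul_self (hp _ (by simp at hk ⊢; omega))]
    _ = ∑ k ∈ Icc 1 T, (A k - A (k + 1)) * x k := by
        rw [sum_Icc_mul_sub_eq, hx0, hxT]; ring
    _ = lam * ∑ k ∈ Icc 1 T, f k (x k) (v k) * x k := by
        rw [mul_sum]
        refine sum_congr rfl fun k hk => ?_
        rw [← mul_assoc, ← heq k hk]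
        simp only [A, Nat.add_sub_cancel]
        ring

theorem sum_energy_le {v x : ℕ → ℝ} (hp : ∀ k ∈ Icc 0 T, p k ≠ 0) (hlam : 0 ≤ lam)
    (hf : ∀ k ∈ Icc 1 T, ∀ v, Antitone fun t => f k t v) {c : ℕ → ℝ}
    (hc : ∀ k ∈ Icc 1 T, ∀ v, |f k 0 v| ≤ c k) (hx : IsDirichletSolution T h p lam f v x) :
    ∑ k ∈ Icc 1 (T + 1), h (k - 1) * |x k - x (k - 1)| ^ p (k - 1) ≤
      lam * ∑ k ∈ Icc 1 T, c k * |x k| := by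
  rw [hx.sum_energy_eq hp]
  refine mul_le_mul_of_nonneg_left (sum_le_sum fun k hk => ?_) hlam
  calc f k (x k) (v k) * x k ≤ f k 0 (v k) * x k := (hf k hk _).apply_mul_le_apply_zero_mul _
    _ ≤ |f k 0 (v k)| * |x k| := by rw [← abs_mul]; exact le_abs_self _
    _ ≤ c k * |x k| := mul_le_mul_of_nonneg_right (hc k hk _) (abs_nonneg _)

theorem exists_abs_le {hm pm C₁ C₂ : ℝ} {c : ℕ → ℝ} (hm_pos : 0 < hm)
    (hhm : ∀ k ∈ Icc 0 T, hm ≤ h k) (hpm : 1 < pm) (hp : ∀ k ∈ Icc 0 T, p k ≠ 0) (hC₁ : 0 < C₁)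
    (hcoerc : ∀ x : ℕ → ℝ, x 0 = 0 → x (T + 1) = 0 →
      1 ≤ (∑ k ∈ Icc 1 (T + 1), (x k - x (k - 1)) ^ 2) ^ ((1 : ℝ) / 2) →
      C₁ * ((∑ k ∈ Icc 1 (T + 1), (x k - x (k - 1)) ^ 2) ^ ((1 : ℝ) / 2)) ^ pm - C₂ ≤
        ∑ k ∈ Icc 1 (T + 1), |x k - x (k - 1)| ^ p (k - 1))
    (hlam : 0 ≤ lam) (hf : ∀ k ∈ Icc 1 T, ∀ v, Antitone fun t => f k t v)
    (hc : ∀ k ∈ Icc 1 T, ∀ v, |f k 0 v| ≤ c k) :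
    ∃ M, ∀ v x, IsDirichletSolution T h p lam f v x → ∀ k ≤ T + 1, |x k| ≤ M := by
  set K := lam * (∑ k ∈ Icc 1 T, c k) * (T + 1)
  set R := ((|hm * C₂| + |K|) / (hm * C₁)) ^ (pm - 1)⁻¹
  refine ⟨(T + 1) * max 1 R, fun v x hx k hk => ?_⟩
  set N := √(∑ k ∈ Icc 1 (T + 1), (x k - x (k - 1)) ^ 2)
  have habs : ∀ k ≤ T + 1, |x k| ≤ (T + 1) * N := fun k hk => by
    simpa using abs_le_mul_sqrt_sum_sq_sub hx.1 hk
  have hN : N ≤ max 1 R := by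
    rcases le_or_gt N 1 with hN1 | hN1
    · exact le_max_of_le_left hN1
    refine le_max_of_le_right <|
      le_rpow_inv_of_mul_rpow_le_add_mul (mul_pos hm_pos hC₁) hpm hN1.le ?_
    have hco := hcoerc x hx.1 hx.2.1 (by rw [← Real.sqrt_eq_rpow]; exact hN1.le)
    rw [← Real.sqrt_eq_rpow] at hco
    have hlow : hm * ∑ k ∈ Icc 1 (T + 1), |x k - x (k - 1)| ^ p (k - 1) ≤
        ∑ k ∈ Icc 1 (T + 1), h (k - 1) * |x k - x (k - 1)| ^ p (k - 1) := by
      rw [mul_sum]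
      exact sum_le_sum fun k hk => mul_le_mul_of_nonneg_right
        (hhm _ (by simp at hk ⊢; omega)) (Real.rpow_nonneg (abs_nonneg _) _)
    have hrhs : ∑ k ∈ Icc 1 T, c k * |x k| ≤ (∑ k ∈ Icc 1 T, c k) * ((T + 1) * N) := by
      rw [sum_mul]
      exact sum_le_sum fun k hk => mul_le_mul_of_nonneg_left
        (habs k (by simp at hk; omega)) ((abs_nonneg _).trans (hc k hk 0))
    calc hm * C₁ * N ^ pm = hm * (C₁ * N ^ pm - C₂) + hm * C₂ := by ring
      _ ≤ lam * ((∑ k ∈ Icc 1 T, c k) * ((T + 1) * N)) + hm * C₂ := by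
        gcongr ?_ + _
        exact (mul_le_mul_of_nonneg_left hco hm_pos.le).trans <| hlow.trans <|
          (hx.sum_energy_le hp hlam hf hc).trans (mul_le_mul_of_nonneg_left hrhs hlam)
      _ = hm * C₂ + K * N := by ring
  exact (habs k hk).trans (by gcongr)

theorem of_tendsto {ι : Type*} {l : Filter ι} [l.NeBot] (hp : ∀ k ∈ Icc 0 T, 1 < p k)
    (hf : ∀ k, Continuous fun pr : ℝ × ℝ => f k pr.1 pr.2) {v : ι → ℕ → ℝ} {vbar : ℕ → ℝ}
    {x : ι → ℕ → ℝ} {xbar : ℕ → ℝ} (hsol : ∀ i, IsDirichletSolution T h p lam f (v i) (x i))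
    (hv : ∀ k ∈ Icc 1 T, Tendsto (fun i => v i k) l (𝓝 (vbar k)))
    (hx : ∀ k ≤ T + 1, Tendsto (fun i => x i k) l (𝓝 (xbar k)))
    (hxbar : ∀ k, T + 1 < k → xbar k = 0) : IsDirichletSolution T h p lam f vbar xbar := by
  have hboundary : ∀ k, (∀ i, x i k = 0) → k ≤ T + 1 → xbar k = 0 := fun k hk hkT =>
    tendsto_nhds_unique (hx k hkT) (by simp only [hk]; exact tendsto_const_nhds)
  refine ⟨hboundary 0 (fun i => (hsol i).1) (by omega),
    hboundary (T + 1) (fun i => (hsol i).2.1) le_rfl, hxbar, fun k hk => ?_⟩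
  obtain ⟨hk1, hkT⟩ := mem_Icc.1 hk
  have hflux : ∀ j, 1 ≤ j → j ≤ T + 1 → Tendsto
      (fun i => h (j - 1) * (|x i j - x i (j - 1)| ^ (p (j - 1) - 2) * (x i j - x i (j - 1)))) l
      (𝓝 (h (j - 1) * (|xbar j - xbar (j - 1)| ^ (p (j - 1) - 2) * (xbar j - xbar (j - 1))))) :=
    fun j hj1 hjT => (((continuous_abs_rpow_sub_two_mul
      (hp (j - 1) (by simp; omega))).tendsto _).comp
      ((hx j hjT).sub (hx (j - 1) (by omega)))).const_mul _
  have hlhs := ((hflux (k + 1) (by omega) (by omega)).sub (hflux k hk1 (by omega))).neg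
  simp only [Nat.add_sub_cancel, ← mul_assoc] at hlhs
  have hrhs := (((hf k).tendsto _).comp ((hx k (by omega)).prodMk_nhds (hv k hk))).const_mul lam
  exact tendsto_nhds_unique (hlhs.congr fun i => (hsol i).2.2.2 k hk) hrhs

end IsDirichletSolution

theorem stmt14_general (T : ℕ)
    (h p : ℕ → ℝ) (hh : ∀ k ∈ Finset.Icc 0 T, 0 < h k) (hp : ∀ k ∈ Finset.Icc 0 T, 1 < p k)
    (hm pm : ℝ)
    (hhm : hm = (Finset.Icc 0 T).inf' (Finset.nonempty_Icc.mpr (Nat.zero_le T)) h)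
    (hpm : pm = (Finset.Icc 0 T).inf' (Finset.nonempty_Icc.mpr (Nat.zero_le T)) p)
    (f : ℕ → ℝ → ℝ → ℝ) (hcont : ∀ k, Continuous fun pr : ℝ × ℝ => f k pr.1 pr.2)
    -- H1
    (a b q : ℕ → ℝ)
    (hgrowth : ∀ k ∈ Finset.Icc 1 T, ∀ t v : ℝ, |f k t v| ≤ a k * |t| ^ q k + b k)
    -- H2
    (hantitone : ∀ k ∈ Finset.Icc 1 T, ∀ v : ℝ, Antitone fun t => f k t v)
    (C₁ C₂ : ℝ) (hC₁ : 0 < C₁)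
    (hcoerc : ∀ x : ℕ → ℝ, x 0 = 0 → x (T + 1) = 0 →
      1 ≤ (∑ k ∈ Finset.Icc 1 (T + 1), (x k - x (k - 1)) ^ 2) ^ ((1 : ℝ) / 2) →
      C₁ * ((∑ k ∈ Finset.Icc 1 (T + 1), (x k - x (k - 1)) ^ 2) ^ ((1 : ℝ) / 2)) ^ pm - C₂ ≤
        ∑ k ∈ Finset.Icc 1 (T + 1), |x k - x (k - 1)| ^ p (k - 1))
    (lam : ℝ) (hlam0 : 0 < lam)
    (u : ℕ → ℕ → ℝ) (ubar : ℕ → ℝ)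
    (huconv : ∀ k ∈ Finset.Icc 1 T,
      Filter.Tendsto (fun n => u n k) Filter.atTop (nhds (ubar k)))
    (x : ℕ → ℕ → ℝ)
    (hsol : ∀ n : ℕ,
      x n 0 = 0 ∧ x n (T + 1) = 0 ∧ (∀ k, T + 1 < k → x n k = 0) ∧
      ∀ k ∈ Finset.Icc 1 T,
        -(h k * |x n (k + 1) - x n k| ^ (p k - 2) * (x n (k + 1) - x n k) -
            h (k - 1) * |x n k - x n (k - 1)| ^ (p (k - 1) - 2) * (x n k - x n (k - 1))) =
          lam * f k (x n k) (u n k)) :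
    ∃ φ : ℕ → ℕ, StrictMono φ ∧ ∃ xbar : ℕ → ℝ,
      (∀ k ≤ T + 1, Filter.Tendsto (fun i => x (φ i) k) Filter.atTop (nhds (xbar k))) ∧
      xbar 0 = 0 ∧ xbar (T + 1) = 0 ∧ (∀ k, T + 1 < k → xbar k = 0) ∧
      ∀ k ∈ Finset.Icc 1 T,
        -(h k * |xbar (k + 1) - xbar k| ^ (p k - 2) * (xbar (k + 1) - xbar k) -
            h (k - 1) * |xbar k - xbar (k - 1)| ^ (p (k - 1) - 2) * (xbar k - xbar (k - 1))) =
          lam * f k (xbar k) (ubar k) := by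
  have hm_pos : 0 < hm := hhm ▸ (lt_inf'_iff _).2 hh
  have hpm_gt : 1 < pm := hpm ▸ (lt_inf'_iff _).2 hp
  obtain ⟨M, hM⟩ := IsDirichletSolution.exists_abs_le hm_pos (fun k hk => hhm ▸ inf'_le h hk)
    hpm_gt (fun k hk => (zero_lt_one.trans (hp k hk)).ne') hC₁ hcoerc hlam0.le hantitone
    (fun k hk v => hgrowth k hk 0 v)
  obtain ⟨φ, hφ, xbar, hconv, hxbar⟩ :=
    exists_strictMono_tendsto_of_abs_le fun n => hM (u n) (x n) (hsol n)
  exact ⟨φ, hφ, xbar, hconv, IsDirichletSolution.of_tendsto hp hcont (fun i => hsol (φ i))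
    (fun k hk => (huconv k hk).comp hφ.tendsto_atTop) hconv hxbar⟩

theorem stmt14 (T : ℕ) (hT : 1 ≤ T)
    (h p : ℕ → ℝ) (hh : ∀ k ∈ Finset.Icc 0 T, 0 < h k) (hp : ∀ k ∈ Finset.Icc 0 T, 1 < p k)
    (hm pm pP : ℝ)
    (hhm : hm = (Finset.Icc 0 T).inf' (Finset.nonempty_Icc.mpr (Nat.zero_le T)) h)
    (hpm : pm = (Finset.Icc 0 T).inf' (Finset.nonempty_Icc.mpr (Nat.zero_le T)) p)
    (hpP : pP = (Finset.Icc 0 T).sup' (Finset.nonempty_Icc.mpr (Nat.zero_le T)) p)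
    (f : ℕ → ℝ → ℝ → ℝ) (hcont : ∀ k, Continuous fun pr : ℝ × ℝ => f k pr.1 pr.2)
    -- H1
    (a b q : ℕ → ℝ)
    (ha : ∀ k ∈ Finset.Icc 1 T, 0 ≤ a k) (hb : ∀ k ∈ Finset.Icc 1 T, 0 ≤ b k)
    (hq : ∀ k ∈ Finset.Icc 1 T, 1 < q k)
    (hgrowth : ∀ k ∈ Finset.Icc 1 T, ∀ t v : ℝ, |f k t v| ≤ a k * |t| ^ q k + b k)
    -- H2
    (hantitone : ∀ k ∈ Finset.Icc 1 T, ∀ v : ℝ, Antitone fun t => f k t v)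
    (aP qP qm : ℝ)
    (haP : aP = (Finset.Icc 1 T).sup' (Finset.nonempty_Icc.mpr hT) a)
    (hqP : qP = (Finset.Icc 1 T).sup' (Finset.nonempty_Icc.mpr hT) q)
    (hqm : qm = (Finset.Icc 1 T).inf' (Finset.nonempty_Icc.mpr hT) q)
    (C₁ C₂ : ℝ) (hC₁ : 0 < C₁) (hC₂ : 0 < C₂)
    (hcoerc : ∀ x : ℕ → ℝ, x 0 = 0 → x (T + 1) = 0 →
      1 ≤ (∑ k ∈ Finset.Icc 1 (T + 1), (x k - x (k - 1)) ^ 2) ^ ((1 : ℝ) / 2) →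
      C₁ * ((∑ k ∈ Finset.Icc 1 (T + 1), (x k - x (k - 1)) ^ 2) ^ ((1 : ℝ) / 2)) ^ pm - C₂ ≤
        ∑ k ∈ Finset.Icc 1 (T + 1), |x k - x (k - 1)| ^ p (k - 1))
    (cQ : ℝ) (hcQpos : 0 < cQ)
    (hcQ : ∀ x : ℕ → ℝ, x 0 = 0 → x (T + 1) = 0 →
      ∑ k ∈ Finset.Icc 1 T, |x k| ^ (qP + 1) ≤
        cQ * ∑ k ∈ Finset.Icc 1 (T + 1), |x k - x (k - 1)| ^ (qP + 1))
    (lam : ℝ) (hlam0 : 0 < lam)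
    (hexp : qP + 1 < pm ∨ (pm = qP + 1 ∧ lam < C₁ * hm * (qm + 1) / (pP * aP * cQ)))
    -- H3
    (hH3 : ∃ k₀ ∈ Finset.Icc 1 T, ∀ v : ℝ, f k₀ 0 v ≠ 0)
    (u : ℕ → ℕ → ℝ) (ubar : ℕ → ℝ)
    (huconv : ∀ k ∈ Finset.Icc 1 T,
      Filter.Tendsto (fun n => u n k) Filter.atTop (nhds (ubar k)))
    (x : ℕ → ℕ → ℝ)
    (hsol : ∀ n : ℕ,
      x n 0 = 0 ∧ x n (T + 1) = 0 ∧ (∀ k, T + 1 < k → x n k = 0) ∧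
      ∀ k ∈ Finset.Icc 1 T,
        -(h k * |x n (k + 1) - x n k| ^ (p k - 2) * (x n (k + 1) - x n k) -
            h (k - 1) * |x n k - x n (k - 1)| ^ (p (k - 1) - 2) * (x n k - x n (k - 1))) =
          lam * f k (x n k) (u n k)) :
    ∃ φ : ℕ → ℕ, StrictMono φ ∧ ∃ xbar : ℕ → ℝ,
      (∀ k ≤ T + 1, Filter.Tendsto (fun i => x (φ i) k) Filter.atTop (nhds (xbar k))) ∧
      xbar 0 = 0 ∧ xbar (T + 1) = 0 ∧ (∀ k, T + 1 < k → xbar k = 0) ∧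
      ∀ k ∈ Finset.Icc 1 T,
        -(h k * |xbar (k + 1) - xbar k| ^ (p k - 2) * (xbar (k + 1) - xbar k) -
            h (k - 1) * |xbar k - xbar (k - 1)| ^ (p (k - 1) - 2) * (xbar k - xbar (k - 1))) =
          lam * f k (xbar k) (ubar k) :=
  stmt14_general T h p hh hp hm pm hhm hpm f hcont a b q hgrowth hantitone C₁ C₂ hC₁ hcoerc lam
    hlam0 u ubar huconv x hsol
end
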